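/- arXiv:1801.01208 — 3 statements merged into one kernel-verified Lean document; each statement's English description precedes it below -/
import Mathlib

section
/- Let P = {x ∈ ℝ^n : Ax ≤ b, 0 ≤ x_i ≤ u_i for i ∈ I} be a rational polytope with I = {1,…,l}. If ℬ = (B^1,…,B^l) and 𝒞 = (C^1,…,C^l) are two binarization schemes in which every component is a unimodular binarization polytope (B^i, C^i ∈ Γ^{u_i}_{u_i} unimodular), then proj_x(SC(P_ℬ, I_ℬ)) = proj_x(SC(P_𝒞, I_𝒞)). -/
open Set

/-- The split closure of `P` with respect to a family `Λ` of (integral) linear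
functionals: the intersection over all `f ∈ Λ` and all integers `c` of the convex
hull of `P` minus the split set `{x : c < f x < c + 1}`. -/
noncomputable def splitClosure {E : Type*} [AddCommGroup E] [Module ℝ E]
    (Λ : Set (E → ℝ)) (P : Set E) : Set E :=
  ⋂ f ∈ Λ, ⋂ c : ℤ, convexHull ℝ (P \ {x | (c : ℝ) < f x ∧ f x < c + 1})

/-- A rational polytope in `ℝ × ℝ^q`: the convex hull of finitely many rational points. -/
def IsRatPolytopeBin (q : ℕ) (B : Set (ℝ × (Fin q → ℝ))) : Prop :=
  ∃ V : Finset (ℝ × (Fin q → ℝ)),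
    (∀ p ∈ V, (∃ r : ℚ, p.1 = (r : ℝ)) ∧ ∀ j, ∃ r : ℚ, p.2 j = (r : ℝ)) ∧
    B = convexHull ℝ (V : Set (ℝ × (Fin q → ℝ)))

/-- `B ∈ Γ^q_u`: a binarization polytope for a variable `x ∈ {0,…,u}` using `q` binary
variables: a rational polytope contained in `[0,u] × [0,1]^q` whose set of 0-1 points
projects (in the `x` coordinate) exactly onto `{0,1,…,u}`. -/
def IsBinPoly (u q : ℕ) (B : Set (ℝ × (Fin q → ℝ))) : Prop :=
  IsRatPolytopeBin q B ∧
  (∀ p ∈ B, 0 ≤ p.1 ∧ p.1 ≤ (u : ℝ) ∧ ∀ j, 0 ≤ p.2 j ∧ p.2 j ≤ 1) ∧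
  Prod.fst '' (B ∩ {p | ∀ j, p.2 j = 0 ∨ p.2 j = 1}) = {x : ℝ | ∃ k : ℕ, k ≤ u ∧ x = (k : ℝ)}

/-- A unimodular binarization polytope `B ∈ Γ^u_u`: a perfect binarization polytope
`B = conv{(j, w^j) : j = 0,…,u}` with `w^j ∈ {0,1}^u` such that the `u × u` matrix
with columns `w^j - w^0`, `j = 1,…,u`, is unimodular (integral with determinant `±1`). -/
def IsUnimodularBin (u : ℕ) (B : Set (ℝ × (Fin u → ℝ))) : Prop :=
  IsBinPoly u u B ∧
  ∃ w : Fin (u + 1) → Fin u → ℝ,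
    (∀ j i, w j i = 0 ∨ w j i = 1) ∧
    B = convexHull ℝ {p : ℝ × (Fin u → ℝ) | ∃ j : Fin (u + 1), p = (((j : ℕ) : ℝ), w j)} ∧
    ∃ N : Matrix (Fin u) (Fin u) ℤ,
      (∀ i j : Fin u, (N i j : ℝ) = w j.succ i - w 0 i) ∧ (N.det = 1 ∨ N.det = -1)

/-- The binary extended formulation `P_ℬ ⊆ ℝ^n × ℝ^{q₁} × ⋯ × ℝ^{q_l}` associated with a
binarization scheme `ℬ = (B^1,…,B^l)`: the set of `(x,z)` with `x ∈ P` and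
`(x_i, z_i) ∈ B^i` for each `i ∈ I = {1,…,l}`. -/
def extForm {n l : ℕ} (hln : l ≤ n) {q : Fin l → ℕ} (P : Set (Fin n → ℝ))
    (B : (i : Fin l) → Set (ℝ × (Fin (q i) → ℝ))) :
    Set ((Fin n → ℝ) × ((i : Fin l) → Fin (q i) → ℝ)) :=
  {p | p.1 ∈ P ∧ ∀ i : Fin l, (p.1 (Fin.castLE hln i), p.2 i) ∈ B i}

/-- The family of split functionals on the extended space corresponding to the index set
`I_ℬ = {1,…,l} ∪ {n+1,…,n+q}`: integer coefficients on `x_1,…,x_l` and on all of the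
binarization variables `z`, zero coefficients on `x_{l+1},…,x_n`. -/
def extSplits (n l : ℕ) (hln : l ≤ n) (q : Fin l → ℕ) :
    Set (((Fin n → ℝ) × ((i : Fin l) → Fin (q i) → ℝ)) → ℝ) :=
  {f | ∃ (π : Fin l → ℤ) (c : (i : Fin l) → Fin (q i) → ℤ),
    f = fun p => (∑ i, (π i : ℝ) * p.1 (Fin.castLE hln i)) +
      ∑ i, ∑ j, (c i j : ℝ) * p.2 i j}

/-! Two unimodular binarizations of `{0,…,u}` with vertex vectors `w^j` and `v^j` are related
by the integral affine map `z ↦ K z + t` sending `v^j` to `w^j`: take `K = N_w N_v⁻¹`, where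
`N_w` has the columns `w^j - w^0` (integral since `N_v` is unimodular), and `t = w^0 - K v^0`.
Extended by the identity on `x`, this map sends `P_𝒞` into `P_ℬ`, and every split functional of
`I_ℬ` composed with it is a split functional of `I_𝒞` plus an integer; hence it maps
`SC(P_𝒞, I_𝒞)` into `SC(P_ℬ, I_ℬ)` without moving `x`. Exchanging the roles of `ℬ` and `𝒞`
gives the reverse inclusion. -/

open Matrix

theorem splitClosure_mapsTo {E F : Type*} [AddCommGroup E] [Module ℝ E] [AddCommGroup F]
    [Module ℝ F] (f : E →ᵃ[ℝ] F) {Λ : Set (E → ℝ)} {Λ' : Set (F → ℝ)}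
    (hΛ : ∀ φ ∈ Λ', ∃ ψ ∈ Λ, ∃ D : ℤ, ∀ x, φ (f x) = ψ x + D)
    {P : Set E} {Q : Set F} (hPQ : MapsTo f P Q) :
    MapsTo f (splitClosure Λ P) (splitClosure Λ' Q) := by
  intro x hx
  simp only [splitClosure, mem_iInter] at hx ⊢
  intro φ hφ c
  obtain ⟨ψ, hψ, D, hD⟩ := hΛ φ hφ
  refine convexHull_mono ?_ (f.image_convexHull _ ▸ mem_image_of_mem f (hx ψ hψ (c - D)))
  rintro _ ⟨p, ⟨hpP, hpS⟩, rfl⟩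
  refine ⟨hPQ hpP, fun ⟨h₁, h₂⟩ => hpS ⟨?_, ?_⟩⟩ <;> push_cast <;> linarith [hD p]

section IntAffineMap

variable {m κ : Type*} [Fintype κ]

noncomputable def intAffineMap (K : Matrix m κ ℤ) (t : m → ℤ) : (κ → ℝ) →ᵃ[ℝ] (m → ℝ) :=
  (K.map ((↑) : ℤ → ℝ)).mulVecLin.toAffineMap + AffineMap.const ℝ _ ((↑) ∘ t)

theorem intAffineMap_apply (K : Matrix m κ ℤ) (t : m → ℤ) (z : κ → ℝ) :
    intAffineMap K t z = K.map (↑) *ᵥ z + (↑) ∘ t := rfl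

theorem intAffineMap_intCast (K : Matrix m κ ℤ) (t : m → ℤ) (v : κ → ℤ) :
    intAffineMap K t ((↑) ∘ v) = (↑) ∘ (K *ᵥ v + t) := by
  ext i
  simpa [intAffineMap_apply] using (RingHom.map_mulVec (Int.castRingHom ℝ) K v i).symm

theorem intCast_dotProduct_intAffineMap [Fintype m] (K : Matrix m κ ℤ) (t c : m → ℤ)
    (z : κ → ℝ) :
    (↑) ∘ c ⬝ᵥ intAffineMap K t z = (↑) ∘ (c ᵥ* K) ⬝ᵥ z + ((c ⬝ᵥ t : ℤ) : ℝ) := by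
  have hc : ((↑) ∘ (c ᵥ* K) : κ → ℝ) = (↑) ∘ c ᵥ* K.map (↑) := by
    ext j; exact RingHom.map_vecMul (Int.castRingHom ℝ) K c j
  rw [intAffineMap_apply, dotProduct_add, dotProduct_mulVec, hc]
  exact congrArg _ (RingHom.map_dotProduct (Int.castRingHom ℝ) c t).symm

end IntAffineMap

section BlockAffineMap

variable {X ι : Type*} [AddCommGroup X] [Module ℝ X] {κ κ' : ι → Type*}

noncomputable def blockAffineMap (f : ∀ i, (κ i → ℝ) →ᵃ[ℝ] (κ' i → ℝ)) :
    X × (∀ i, κ i → ℝ) →ᵃ[ℝ] X × (∀ i, κ' i → ℝ) :=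
  (AffineMap.id ℝ X).prodMap (AffineMap.pi fun i => (f i).comp (AffineMap.proj i))

theorem blockAffineMap_apply (f : ∀ i, (κ i → ℝ) →ᵃ[ℝ] (κ' i → ℝ)) (p : X × (∀ i, κ i → ℝ)) :
    blockAffineMap f p = (p.1, fun i => f i (p.2 i)) := rfl

end BlockAffineMap

theorem extForm_mapsTo {n l : ℕ} (hln : l ≤ n) {q q' : Fin l → ℕ} (P : Set (Fin n → ℝ))
    {B : (i : Fin l) → Set (ℝ × (Fin (q' i) → ℝ))} {C : (i : Fin l) → Set (ℝ × (Fin (q i) → ℝ))}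
    {f : ∀ i, (Fin (q i) → ℝ) →ᵃ[ℝ] (Fin (q' i) → ℝ)}
    (hf : ∀ i, MapsTo (Prod.map id (f i)) (C i) (B i)) :
    MapsTo (blockAffineMap f) (extForm hln P C) (extForm hln P B) :=
  fun _ ⟨hx, hz⟩ => ⟨hx, fun i => hf i (hz i)⟩

theorem extSplits_comp_blockAffineMap {n l : ℕ} (hln : l ≤ n) {q q' : Fin l → ℕ}
    (K : ∀ i, Matrix (Fin (q' i)) (Fin (q i)) ℤ) (t : ∀ i, Fin (q' i) → ℤ) :
    ∀ φ ∈ extSplits n l hln q', ∃ ψ ∈ extSplits n l hln q, ∃ D : ℤ,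
      ∀ p, φ (blockAffineMap (fun i => intAffineMap (K i) (t i)) p) = ψ p + D := by
  rintro _ ⟨π, c, rfl⟩
  refine ⟨_, ⟨π, fun i => c i ᵥ* K i, rfl⟩, ∑ i, c i ⬝ᵥ t i, fun p => ?_⟩
  have h := fun i => intCast_dotProduct_intAffineMap (K i) (t i) (c i) (p.2 i)
  simp only [dotProduct, Function.comp_apply] at h
  simp only [blockAffineMap_apply, h, Finset.sum_add_distrib, dotProduct, Int.cast_sum]
  ring

theorem convexHull_range_prod_mapsTo {ι V W : Type*} [AddCommGroup V] [Module ℝ V]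
    [AddCommGroup W] [Module ℝ W] (a : ι → ℝ) {v : ι → V} {w : ι → W} {f : V →ᵃ[ℝ] W}
    (hf : ∀ j, f (v j) = w j) :
    MapsTo (Prod.map id f) (convexHull ℝ (range fun j => (a j, v j)))
      (convexHull ℝ (range fun j => (a j, w j))) := by
  rw [mapsTo_iff_image_subset, show Prod.map id f = (AffineMap.id ℝ ℝ).prodMap f from rfl,
    AffineMap.image_convexHull, ← range_comp]
  exact convexHull_mono (range_subset_iff.2 fun j => ⟨j, by simp [hf]⟩)

def diffMatrix {u : ℕ} (W : Fin (u + 1) → Fin u → ℤ) : Matrix (Fin u) (Fin u) ℤ :=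
  Matrix.of fun i j => W j.succ i - W 0 i

theorem IsUnimodularBin.exists_int_vertices {u : ℕ} {B : Set (ℝ × (Fin u → ℝ))}
    (h : IsUnimodularBin u B) :
    ∃ W : Fin (u + 1) → Fin u → ℤ,
      B = convexHull ℝ (range fun j : Fin (u + 1) => (((j : ℕ) : ℝ), ((↑) : ℤ → ℝ) ∘ W j)) ∧
        IsUnit (diffMatrix W).det := by
  obtain ⟨-, w, hw01, rfl, N, hN, hdet⟩ := h
  set W : Fin (u + 1) → Fin u → ℤ := fun j i => if w j i = 1 then 1 else 0
  have hW : ∀ j, ((↑) : ℤ → ℝ) ∘ W j = w j := fun j => by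
    ext i; rcases hw01 j i with h | h <;> simp [W, h]
  refine ⟨W, ?_, ?_⟩
  · simp only [hW]
    congr 1
    ext p
    simp [eq_comm]
  have hNW : diffMatrix W = N := by
    ext i j
    have := hN i j
    rw [← hW, ← hW] at this
    simp only [Function.comp_apply] at this
    exact_mod_cast this.symm
  rw [hNW]
  rcases hdet with h | h <;> simp [h]

theorem exists_intAffine_vertices {u : ℕ} (V W : Fin (u + 1) → Fin u → ℤ)
    (hW : IsUnit (diffMatrix W).det) :
    ∃ (K : Matrix (Fin u) (Fin u) ℤ) (t : Fin u → ℤ), ∀ j, K *ᵥ W j + t = V j := by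
  set K := diffMatrix V * (diffMatrix W)⁻¹
  have hK : K * diffMatrix W = diffMatrix V := nonsing_inv_mul_cancel_right _ _ hW
  have hsucc : ∀ (X : Fin (u + 1) → Fin u → ℤ) m, X m.succ = X 0 + (diffMatrix X)ᵀ m :=
    fun X m => by ext i; simp [diffMatrix]
  refine ⟨K, V 0 - K *ᵥ W 0, fun j => ?_⟩
  cases j using Fin.cases with
  | zero => abel
  | succ m =>
    have hcol : K *ᵥ (diffMatrix W)ᵀ m = (diffMatrix V)ᵀ m := by rw [← hK]; rfl
    rw [hsucc W, hsucc V, mulVec_add, hcol]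
    abel

theorem fst_image_splitClosure_extForm_subset {n l : ℕ} (hln : l ≤ n) {u : Fin l → ℕ}
    (P : Set (Fin n → ℝ)) {B C : (i : Fin l) → Set (ℝ × (Fin (u i) → ℝ))}
    (hB : ∀ i, IsUnimodularBin (u i) (B i)) (hC : ∀ i, IsUnimodularBin (u i) (C i)) :
    Prod.fst '' splitClosure (extSplits n l hln u) (extForm hln P C) ⊆
      Prod.fst '' splitClosure (extSplits n l hln u) (extForm hln P B) := by
  choose WB hBW _ using fun i => (hB i).exists_int_vertices
  choose WC hCW hWC using fun i => (hC i).exists_int_vertices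
  choose K t hKt using fun i => exists_intAffine_vertices (WB i) (WC i) (hWC i)
  set Φ := blockAffineMap (X := Fin n → ℝ) fun i => intAffineMap (K i) (t i)
  have hslice : ∀ i, MapsTo (Prod.map id (intAffineMap (K i) (t i))) (C i) (B i) := fun i => by
    rw [hBW i, hCW i]
    exact convexHull_range_prod_mapsTo _ fun j => by rw [intAffineMap_intCast, hKt]
  have hSC := splitClosure_mapsTo Φ (extSplits_comp_blockAffineMap hln K t)
    (extForm_mapsTo hln P hslice)
  rintro _ ⟨p, hp, rfl⟩
  exact ⟨Φ p, hSC hp, rfl⟩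

theorem stmt3_general (n l : ℕ) (hln : l ≤ n)
    (u : Fin l → ℕ)
    (P : Set (Fin n → ℝ))
    (B : (i : Fin l) → Set (ℝ × (Fin (u i) → ℝ)))
    (hB : ∀ i, IsUnimodularBin (u i) (B i))
    (C : (i : Fin l) → Set (ℝ × (Fin (u i) → ℝ)))
    (hC : ∀ i, IsUnimodularBin (u i) (C i)) :
    Prod.fst '' (splitClosure (extSplits n l hln (fun i => u i)) (extForm hln P B)) =
      Prod.fst '' (splitClosure (extSplits n l hln (fun i => u i)) (extForm hln P C)) :=
  (fst_image_splitClosure_extForm_subset hln P hC hB).antisymm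
    (fst_image_splitClosure_extForm_subset hln P hB hC)

/-- Let `P = {x ∈ ℝ^n : Ax ≤ b, 0 ≤ x_i ≤ u_i for i ∈ I}` be a
rational polytope with `I = {1,…,l}`.  If `ℬ = (B^1,…,B^l)` and `𝒞 = (C^1,…,C^l)` are
two binarization schemes all of whose components are unimodular binarization polytopes
in `Γ^{u_i}_{u_i}`, then `proj_x(SC(P_ℬ, I_ℬ)) = proj_x(SC(P_𝒞, I_𝒞))`. -/
theorem stmt3 (n l m : ℕ) (hln : l ≤ n)
    (A : Fin m → Fin n → ℚ) (b : Fin m → ℚ) (u : Fin l → ℕ) (hu : ∀ i, 0 < u i)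
    (P : Set (Fin n → ℝ))
    (hP : P = {x | (∀ r, ∑ j, (A r j : ℝ) * x j ≤ (b r : ℝ)) ∧
      ∀ i : Fin l, 0 ≤ x (Fin.castLE hln i) ∧ x (Fin.castLE hln i) ≤ (u i : ℝ)})
    (hPbdd : Bornology.IsBounded P)
    (B : (i : Fin l) → Set (ℝ × (Fin (u i) → ℝ)))
    (hB : ∀ i, IsUnimodularBin (u i) (B i))
    (C : (i : Fin l) → Set (ℝ × (Fin (u i) → ℝ)))
    (hC : ∀ i, IsUnimodularBin (u i) (C i)) :
    Prod.fst '' (splitClosure (extSplits n l hln (fun i => u i)) (extForm hln P B)) =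
      Prod.fst '' (splitClosure (extSplits n l hln (fun i => u i)) (extForm hln P C)) :=
  stmt3_general n l hln u P B hB C hC
end

section
/- Let P = {x ∈ ℝ^n : Ax ≤ b, 0 ≤ x_i ≤ u_i for i ∈ I} be a rational polytope with I = {1,…,l}, and let ℬ = (B^1,…,B^l) be a binarization scheme in which each B^i ∈ Γ^{u_i}_{u_i} is a unimodular binarization polytope. Then proj_x(SC^q(P_ℬ, I_ℬ)) = conv(P^I), where q = Σ_{i=1}^l ⌈log₂(u_i+1)⌉. -/
open Set

/-!
Since the matrix `N` with columns `w^j - w^0` is unimodular, for every bit position `t` there is an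
integral functional `φ_t` of the binarization variables and an integer `c_t` with
`φ_t(w^j) = c_t + (t-th binary digit of j)` for every vertex `(j, w^j)` of `B`. Being affine, these
identities pass to all of `B`: there `c_t ≤ φ_t ≤ c_t + 1` and `x = ∑_t 2^t (φ_t - c_t)`. One split
closure per pair `(i, t)` therefore confines `SC^q(P_ℬ)` to the convex hull of the points of `P_ℬ`
on which every `φ_t - c_t` is `0` or `1`, and at those points every `x_i` is an integer.
Conversely, an integral point `x` of `P` lifts to a point `(x, z)` of `P_ℬ` with binary `z`; every
split functional is integral there, so `(x, z)` survives all split closures, and the projection of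
the convex set `SC^q(P_ℬ)` contains `conv(P^I)`.
-/

section SplitClosure

variable {E : Type*} [AddCommGroup E] [Module ℝ E]

theorem convexHull_inter_setOf_eq_subset_of_le (F : E →ₗ[ℝ] ℝ) {r : ℝ} {X : Set E}
    (hX : ∀ x ∈ X, F x ≤ r) :
    convexHull ℝ X ∩ {p | F p = r} ⊆ convexHull ℝ {x ∈ X | F x = r} := by
  suffices convexHull ℝ X ⊆ {p | F p ≤ r ∧ (F p = r → p ∈ convexHull ℝ {x ∈ X | F x = r})} from
    fun p ⟨hp, hpr⟩ => (this hp).2 hpr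
  refine convexHull_min (fun x hx => ⟨hX x hx, fun hxr => subset_convexHull ℝ _ ⟨hx, hxr⟩⟩) ?_
  -- A segment in `{F ≤ r}` meeting `{F = r}` at an interior point lies in `{F = r}`.
  rintro p ⟨hp, hpH⟩ q ⟨hq, hqH⟩ a b ha hb hab
  have hF : F (a • p + b • q) = a * F p + b * F q := by simp
  obtain rfl : b = 1 - a := by linarith
  refine ⟨by rw [hF]; nlinarith, fun hr => ?_⟩
  rw [hF] at hr
  rcases ha.eq_or_lt with rfl | ha
  · simpa using hqH (by linarith)
  rcases hb.eq_or_lt with hb | hb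
  · obtain rfl : a = 1 := by linarith
    simpa using hpH (by linarith)
  exact convex_convexHull ℝ _ (hpH (by nlinarith)) (hqH (by nlinarith)) ha.le hb.le hab

theorem convexHull_inter_setOf_eq_subset_of_ge (F : E →ₗ[ℝ] ℝ) {r : ℝ} {X : Set E}
    (hX : ∀ x ∈ X, r ≤ F x) :
    convexHull ℝ X ∩ {p | F p = r} ⊆ convexHull ℝ {x ∈ X | F x = r} := by
  simpa using convexHull_inter_setOf_eq_subset_of_le (-F) (r := -r) (by simpa using hX)

theorem convexHull_diff_split_subset (F : E →ₗ[ℝ] ℝ) (c : ℤ) {X Y : Set E}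
    (hX : ∀ x ∈ X, (c : ℝ) ≤ F x ∧ F x ≤ c + 1) (hY : Y ⊆ convexHull ℝ X) :
    convexHull ℝ (Y \ {p | (c : ℝ) < F p ∧ F p < c + 1}) ⊆
      convexHull ℝ {x ∈ X | F x = c ∨ F x = c + 1} := by
  refine convexHull_min ?_ (convex_convexHull ℝ _)
  rintro p ⟨hpY, hpS⟩
  have hp : p ∈ convexHull ℝ X := hY hpY
  have hpc : (c : ℝ) ≤ F p ∧ F p ≤ c + 1 :=
    convexHull_min (fun x hx => hX x hx) ((convex_Icc _ _).linear_preimage F) hp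
  rcases hpc.1.eq_or_lt with hlo | hlo
  · refine convexHull_mono ?_
      (convexHull_inter_setOf_eq_subset_of_ge F (fun x hx => (hX x hx).1) ⟨hp, hlo.symm⟩)
    exact fun x hx => ⟨hx.1, Or.inl hx.2⟩
  · have hhi : F p = c + 1 := hpc.2.antisymm (not_lt.1 fun h => hpS ⟨hlo, h⟩)
    refine convexHull_mono ?_
      (convexHull_inter_setOf_eq_subset_of_le F (fun x hx => (hX x hx).2) ⟨hp, hhi⟩)
    exact fun x hx => ⟨hx.1, Or.inr hx.2⟩

variable {Λ : Set (E → ℝ)}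

theorem splitClosure_subset_convexHull_diff {f : E → ℝ} (hf : f ∈ Λ) (c : ℤ) (Y : Set E) :
    splitClosure Λ Y ⊆ convexHull ℝ (Y \ {p | (c : ℝ) < f p ∧ f p < c + 1}) :=
  fun _ hp => mem_iInter.1 (mem_iInter₂.1 hp f hf) c

theorem iterate_splitClosure_subset_convexHull {ι : Type*} [Fintype ι] {X : Set E}
    (F : ι → E →ₗ[ℝ] ℝ) (c : ι → ℤ) (hF : ∀ t, ⇑(F t) ∈ Λ)
    (hX : ∀ t, ∀ x ∈ X, (c t : ℝ) ≤ F t x ∧ F t x ≤ c t + 1) :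
    (splitClosure Λ)^[Fintype.card ι] X ⊆
      convexHull ℝ {x ∈ X | ∀ t, F t x = c t ∨ F t x = c t + 1} := by
  classical
  suffices ∀ s : Finset ι, (splitClosure Λ)^[s.card] X ⊆
      convexHull ℝ {x ∈ X | ∀ t ∈ s, F t x = c t ∨ F t x = c t + 1} by
    simpa using this Finset.univ
  intro s
  induction s using Finset.induction_on with
  | empty => simpa using subset_convexHull ℝ X
  | insert a s ha ih =>
    rw [Finset.card_insert_of_notMem ha, Function.iterate_succ_apply']
    refine (splitClosure_subset_convexHull_diff (hF a) (c a) _).trans <|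
      (convexHull_diff_split_subset (F a) (c a) (fun x hx => hX a x hx.1) ih).trans <|
      convexHull_mono ?_
    rintro x ⟨⟨hx, hs⟩, ha⟩
    exact ⟨hx, Finset.forall_mem_insert _ _ _ |>.2 ⟨ha, hs⟩⟩

theorem convex_splitClosure (Y : Set E) : Convex ℝ (splitClosure Λ Y) :=
  convex_iInter₂ fun _ _ => convex_iInter fun _ => convex_convexHull ℝ _

theorem Convex.iterate_splitClosure {X : Set E} (hX : Convex ℝ X) (k : ℕ) :
    Convex ℝ ((splitClosure Λ)^[k] X) := by
  cases k with
  | zero => exact hX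
  | succ k => rw [Function.iterate_succ_apply']; exact convex_splitClosure _

theorem mem_iterate_splitClosure_of_forall_int {X : Set E} {p : E} (hp : p ∈ X)
    (hint : ∀ f ∈ Λ, ∃ m : ℤ, f p = m) (k : ℕ) : p ∈ (splitClosure Λ)^[k] X := by
  induction k with
  | zero => exact hp
  | succ k ih =>
    rw [Function.iterate_succ_apply']
    refine mem_iInter₂.2 fun f hf => mem_iInter.2 fun c => subset_convexHull ℝ _ ⟨ih, ?_⟩
    rintro ⟨hlo, hhi⟩
    obtain ⟨m, hm⟩ := hint f hf
    rw [hm] at hlo hhi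
    have : c < m := by exact_mod_cast hlo
    have : m < c + 1 := by exact_mod_cast hhi
    omega

end SplitClosure

theorem Nat.sum_two_pow_mul_testBit {j T : ℕ} (hj : j < 2 ^ T) :
    ∑ t : Fin T, 2 ^ (t : ℕ) * (j.testBit t).toNat = j := by
  have hbits : (Finset.range T).filter (j.testBit ·) = j.bitIndices.toFinset := by
    ext t
    simp only [Finset.mem_filter, Finset.mem_range, List.mem_toFinset, Nat.mem_bitIndices,
      and_iff_right_iff_imp]
    exact fun ht =>
      (Nat.pow_lt_pow_iff_right (by norm_num)).1 ((Nat.ge_two_pow_of_testBit ht).trans_lt hj)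
  rw [Fin.sum_univ_eq_sum_range (fun t => 2 ^ t * (j.testBit t).toNat)]
  conv_rhs => rw [← Finset.sum_toFinset_bitIndices_two_pow j, ← hbits, Finset.sum_filter]
  refine Finset.sum_congr rfl fun t _ => ?_
  cases j.testBit t <;> simp

theorem IsBinPoly.exists_binary_mem {u q : ℕ} {B : Set (ℝ × (Fin q → ℝ))} (hB : IsBinPoly u q B)
    {x : ℝ} (hx : ∃ m : ℤ, x = m) (h0 : 0 ≤ x) (hu : x ≤ u) :
    ∃ z : Fin q → ℝ, (∀ j, z j = 0 ∨ z j = 1) ∧ (x, z) ∈ B := by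
  obtain ⟨m, rfl⟩ := hx
  have hm : (m.toNat : ℝ) = m := by exact_mod_cast Int.toNat_of_nonneg (by exact_mod_cast h0)
  have hxk : (m : ℝ) ∈ {x : ℝ | ∃ k : ℕ, k ≤ u ∧ x = k} :=
    ⟨m.toNat, by rw [← Nat.cast_le (α := ℝ), hm]; exact hu, hm.symm⟩
  rw [← hB.2.2] at hxk
  obtain ⟨p, ⟨hpB, hpbin⟩, hp⟩ := hxk
  exact ⟨p.2, hpbin, hp ▸ hpB⟩

theorem IsUnimodularBin.convex {u : ℕ} {B : Set (ℝ × (Fin u → ℝ))} (hB : IsUnimodularBin u B) :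
    Convex ℝ B := by
  obtain ⟨-, w, -, rfl, -⟩ := hB
  exact convex_convexHull ℝ _

theorem exists_int_functional_eq_on_vertices {u : ℕ} {w : Fin (u + 1) → Fin u → ℝ}
    (hw : ∀ j i, w j i = 0 ∨ w j i = 1) {N : Matrix (Fin u) (Fin u) ℤ}
    (hNw : ∀ i j, (N i j : ℝ) = w j.succ i - w 0 i) (hN : IsUnit N)
    (β : Fin (u + 1) → ℤ) (hβ : β 0 = 0) :
    ∃ (a : Fin u → ℤ) (c : ℤ), ∀ j, ∑ k, (a k : ℝ) * w j k = c + β j := by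
  obtain ⟨a, ha⟩ := Matrix.vecMul_surjective_iff_isUnit.2 hN fun j => β j.succ
  have : ∀ k, ∃ z : ℤ, w 0 k = z := fun k => by
    rcases hw 0 k with h | h
    exacts [⟨0, by simp [h]⟩, ⟨1, by simp [h]⟩]
  choose z hz using this
  have hc : ∑ k, (a k : ℝ) * w 0 k = ((∑ k, a k * z k : ℤ) : ℝ) := by push_cast; simp [hz]
  refine ⟨a, ∑ k, a k * z k, fun j => ?_⟩
  cases j using Fin.cases with
  | zero => simp [hc, hβ]
  | succ j =>
    have hj := congrArg (Int.cast : ℤ → ℝ) (congrFun ha j)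
    simp only [Matrix.vecMul, dotProduct, Int.cast_sum, Int.cast_mul, hNw] at hj
    rw [← hc, ← hj, ← sub_eq_iff_eq_add', ← Finset.sum_sub_distrib]
    simp [mul_sub]

theorem IsUnimodularBin.exists_bit_functionals {u : ℕ} {B : Set (ℝ × (Fin u → ℝ))}
    (hB : IsUnimodularBin u B) {T : ℕ} (hT : u + 1 ≤ 2 ^ T) :
    ∃ (a : Fin T → Fin u → ℤ) (c : Fin T → ℤ), ∀ p ∈ B,
      (∀ t, (c t : ℝ) ≤ ∑ k, (a t k : ℝ) * p.2 k ∧ ∑ k, (a t k : ℝ) * p.2 k ≤ c t + 1) ∧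
      p.1 = ∑ t : Fin T, 2 ^ (t : ℕ) * (∑ k, (a t k : ℝ) * p.2 k - c t) := by
  obtain ⟨-, w, hw, rfl, N, hNw, hdet⟩ := hB
  have hN : IsUnit N := (Matrix.isUnit_iff_isUnit_det N).2 (by rcases hdet with h | h <;> simp [h])
  choose a c hvert using fun t : Fin T =>
    exists_int_functional_eq_on_vertices hw hNw hN (fun j => ((j : ℕ).testBit t).toNat) (by simp)
  let φ : Fin T → ℝ × (Fin u → ℝ) →ₗ[ℝ] ℝ := fun t =>
    dotProductBilin ℝ ℝ (fun k => (a t k : ℝ)) ∘ₗ LinearMap.snd ℝ ℝ (Fin u → ℝ)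
  have hφ : ∀ t p, φ t p = ∑ k, (a t k : ℝ) * p.2 k := fun _ _ => rfl
  let ψ : ℝ × (Fin u → ℝ) →ₗ[ℝ] ℝ :=
    LinearMap.fst ℝ ℝ (Fin u → ℝ) - ∑ t : Fin T, (2 : ℝ) ^ (t : ℕ) • φ t
  have hψ : ∀ p, ψ p = p.1 - ∑ t : Fin T, 2 ^ (t : ℕ) * φ t p := fun p => by simp [ψ]
  refine ⟨a, c, fun p hp => ⟨fun t => ?_, ?_⟩⟩
  · refine (convexHull_min ?_ ((convex_Icc (c t : ℝ) (c t + 1)).linear_preimage (φ t)) hp :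
      p ∈ φ t ⁻¹' Icc _ _)
    rintro _ ⟨j, rfl⟩
    have hbit : (((j : ℕ).testBit t).toNat : ℝ) ≤ 1 := by exact_mod_cast Bool.toNat_le _
    have := hvert t j
    simp only [Set.mem_preimage, Set.mem_Icc, hφ]
    push_cast at this
    constructor <;> linarith [(((j : ℕ).testBit t).toNat.cast_nonneg : (0 : ℝ) ≤ _)]
  · have hp' : ψ p = -∑ t : Fin T, 2 ^ (t : ℕ) * (c t : ℝ) := by
      refine convexHull_min ?_ ((convex_singleton _).linear_preimage ψ) hp
      rintro _ ⟨j, rfl⟩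
      have hj := congrArg (Nat.cast : ℕ → ℝ) (Nat.sum_two_pow_mul_testBit (j.isLt.trans_le hT))
      push_cast at hj hvert
      simp only [Set.mem_preimage, Set.mem_singleton_iff, hψ, hφ, hvert, mul_add,
        Finset.sum_add_distrib]
      linarith
    simp only [hψ, hφ] at hp'
    simp only [mul_sub, Finset.sum_sub_distrib]
    linarith

theorem IsUnimodularBin.exists_split_functionals {u : ℕ} {B : Set (ℝ × (Fin u → ℝ))}
    (hB : IsUnimodularBin u B) {T : ℕ} (hT : u + 1 ≤ 2 ^ T) :
    ∃ (a : Fin T → Fin u → ℤ) (c : Fin T → ℤ), ∀ p ∈ B,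
      (∀ t, (c t : ℝ) ≤ ∑ k, (a t k : ℝ) * p.2 k ∧ ∑ k, (a t k : ℝ) * p.2 k ≤ c t + 1) ∧
      ((∀ t, ∑ k, (a t k : ℝ) * p.2 k = c t ∨ ∑ k, (a t k : ℝ) * p.2 k = c t + 1) →
        ∃ m : ℤ, p.1 = m) := by
  obtain ⟨a, c, h⟩ := hB.exists_bit_functionals hT
  refine ⟨a, c, fun p hp => ⟨(h p hp).1, fun hbin => ?_⟩⟩
  have : ∀ t, ∃ e : ℤ, ∑ k, (a t k : ℝ) * p.2 k - c t = e := fun t => by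
    rcases hbin t with h | h
    exacts [⟨0, by simp [h]⟩, ⟨1, by simp [h]⟩]
  choose e he using this
  exact ⟨∑ t : Fin T, 2 ^ (t : ℕ) * e t, by rw [(h p hp).2]; push_cast; simp [he]⟩

section ExtendedFormulation

variable {n l : ℕ} {q : Fin l → ℕ}

def blockFunctional (i : Fin l) (a : Fin (q i) → ℤ) :
    ((Fin n → ℝ) × ((i : Fin l) → Fin (q i) → ℝ)) →ₗ[ℝ] ℝ :=
  dotProductBilin ℝ ℝ (fun k => (a k : ℝ)) ∘ₗ LinearMap.proj i ∘ₗ LinearMap.snd ℝ _ _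

theorem blockFunctional_apply (i : Fin l) (a : Fin (q i) → ℤ)
    (p : (Fin n → ℝ) × ((i : Fin l) → Fin (q i) → ℝ)) :
    blockFunctional i a p = ∑ k, (a k : ℝ) * p.2 i k :=
  rfl

theorem blockFunctional_mem_extSplits (hln : l ≤ n) (i : Fin l) (a : Fin (q i) → ℤ) :
    ⇑(blockFunctional i a) ∈ extSplits n l hln q := by
  classical
  refine ⟨0, Pi.single i a, funext fun p => ?_⟩
  simp only [blockFunctional_apply, Pi.zero_apply, Int.cast_zero, zero_mul, Finset.sum_const_zero,
    zero_add]
  rw [Finset.sum_eq_single i]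
  · simp
  · intro i' _ hi'
    simp [Pi.single_eq_of_ne hi']
  · simp

theorem exists_int_of_mem_extSplits {hln : l ≤ n}
    {f : (Fin n → ℝ) × ((i : Fin l) → Fin (q i) → ℝ) → ℝ} (hf : f ∈ extSplits n l hln q)
    {p : (Fin n → ℝ) × ((i : Fin l) → Fin (q i) → ℝ)}
    (hx : ∀ i, ∃ m : ℤ, p.1 (Fin.castLE hln i) = m) (hz : ∀ i j, ∃ m : ℤ, p.2 i j = m) :
    ∃ m : ℤ, f p = m := by
  obtain ⟨π, c, rfl⟩ := hf
  choose mx hmx using hx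
  choose mz hmz using hz
  exact ⟨∑ i, π i * mx i + ∑ i, ∑ j, c i j * mz i j, by simp [hmx, hmz]⟩

theorem convex_extForm (hln : l ≤ n) {P : Set (Fin n → ℝ)} (hP : Convex ℝ P)
    {B : (i : Fin l) → Set (ℝ × (Fin (q i) → ℝ))} (hB : ∀ i, Convex ℝ (B i)) :
    Convex ℝ (extForm hln P B) := by
  rintro p ⟨hpP, hpB⟩ p' ⟨hp'P, hp'B⟩ a b ha hb hab
  exact ⟨hP hpP hp'P ha hb hab, fun i => by simpa using hB i (hpB i) (hp'B i) ha hb hab⟩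

theorem mem_image_iterate_splitClosure_extForm (hln : l ≤ n) {u : Fin l → ℕ}
    {P : Set (Fin n → ℝ)} {B : (i : Fin l) → Set (ℝ × (Fin (q i) → ℝ))}
    (hB : ∀ i, IsBinPoly (u i) (q i) (B i)) {x : Fin n → ℝ} (hxP : x ∈ P)
    (hxZ : ∀ i, ∃ m : ℤ, x (Fin.castLE hln i) = m)
    (hxu : ∀ i, 0 ≤ x (Fin.castLE hln i) ∧ x (Fin.castLE hln i) ≤ u i) (k : ℕ) :
    x ∈ Prod.fst '' (splitClosure (extSplits n l hln q))^[k] (extForm hln P B) := by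
  choose z hzbin hzB using fun i => (hB i).exists_binary_mem (hxZ i) (hxu i).1 (hxu i).2
  have hxz : (x, z) ∈ extForm hln P B := ⟨hxP, hzB⟩
  refine ⟨(x, z), mem_iterate_splitClosure_of_forall_int hxz (fun f hf => ?_) k, rfl⟩
  refine exists_int_of_mem_extSplits hf hxZ fun i j => ?_
  rcases hzbin i j with h | h
  exacts [⟨0, by simp [h]⟩, ⟨1, by simp [h]⟩]

theorem convex_setOf_sum_le_and_castLE_mem_Icc {m : ℕ} (hln : l ≤ n)
    (A : Fin m → Fin n → ℝ) (b : Fin m → ℝ) (u : Fin l → ℝ) :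
    Convex ℝ {x : Fin n → ℝ | (∀ r, ∑ j, A r j * x j ≤ b r) ∧
      ∀ i, 0 ≤ x (Fin.castLE hln i) ∧ x (Fin.castLE hln i) ≤ u i} := by
  simp only [ofPred_and, ofPred_forall]
  exact (convex_iInter fun r => convex_halfSpace_le (dotProductBilin ℝ ℝ _).isLinear _).inter
    (convex_iInter fun i => (convex_halfSpace_ge (LinearMap.proj _).isLinear _).inter
      (convex_halfSpace_le (LinearMap.proj _).isLinear _))

end ExtendedFormulation

theorem stmt4_general (n l m : ℕ) (hln : l ≤ n)
    (A : Fin m → Fin n → ℚ) (b : Fin m → ℚ) (u : Fin l → ℕ)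
    (P : Set (Fin n → ℝ))
    (hP : P = {x | (∀ r, ∑ j, (A r j : ℝ) * x j ≤ (b r : ℝ)) ∧
      ∀ i : Fin l, 0 ≤ x (Fin.castLE hln i) ∧ x (Fin.castLE hln i) ≤ (u i : ℝ)})
    (B : (i : Fin l) → Set (ℝ × (Fin (u i) → ℝ)))
    (hB : ∀ i, IsUnimodularBin (u i) (B i))
    (q : ℕ) (hq : q = ∑ i, Nat.clog 2 (u i + 1)) :
    Prod.fst '' ((splitClosure (extSplits n l hln (fun i => u i)))^[q] (extForm hln P B)) =
      convexHull ℝ {x ∈ P | ∀ i : Fin l, ∃ w : ℤ, x (Fin.castLE hln i) = (w : ℝ)} := by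
  choose a c hac using fun i =>
    (hB i).exists_split_functionals (Nat.le_pow_clog (by norm_num) (u i + 1))
  have hcard : Fintype.card (Σ i, Fin (Nat.clog 2 (u i + 1))) = q := by simp [hq]
  have hsplit := iterate_splitClosure_subset_convexHull (Λ := extSplits n l hln (fun i => u i))
    (X := extForm hln P B) (fun σ : Σ i, Fin (Nat.clog 2 (u i + 1)) =>
      blockFunctional σ.1 (a σ.1 σ.2)) (fun σ => c σ.1 σ.2)
    (fun σ => blockFunctional_mem_extSplits hln _ _) fun σ p hp => by
      rw [blockFunctional_apply]
      exact (hac σ.1 _ (hp.2 σ.1)).1 σ.2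
  rw [hcard] at hsplit
  have hPu : ∀ x ∈ P, ∀ i, 0 ≤ x (Fin.castLE hln i) ∧ x (Fin.castLE hln i) ≤ u i := by
    rw [hP]; exact fun x hx => hx.2
  have hPconv : Convex ℝ P := by
    rw [hP]; exact convex_setOf_sum_le_and_castLE_mem_Icc hln _ _ _
  refine Subset.antisymm ?_ (convexHull_min ?_ ?_)
  · refine (image_mono hsplit).trans <|
      ((LinearMap.fst ℝ _ _).image_convexHull _).subset.trans (convexHull_mono ?_)
    rintro _ ⟨p, ⟨hpX, hpσ⟩, rfl⟩
    exact ⟨hpX.1, fun i => (hac i _ (hpX.2 i)).2 fun t => hpσ ⟨i, t⟩⟩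
  · exact fun x ⟨hxP, hxZ⟩ =>
      mem_image_iterate_splitClosure_extForm hln (fun i => (hB i).1) hxP hxZ (hPu x hxP) q
  · exact ((convex_extForm hln hPconv fun i => (hB i).convex).iterate_splitClosure q).linear_image
      (LinearMap.fst ℝ _ _)

/-- Let `P = {x ∈ ℝ^n : Ax ≤ b, 0 ≤ x_i ≤ u_i for i ∈ I}` be a
rational polytope with `I = {1,…,l}`, and let `ℬ = (B^1,…,B^l)` be a binarization
scheme of unimodular binarization polytopes `B^i ∈ Γ^{u_i}_{u_i}`.  Then
`proj_x(SC^q(P_ℬ, I_ℬ)) = conv(P^I)` where `q = Σ_{i=1}^l ⌈log₂(u_i+1)⌉`. -/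
theorem stmt4 (n l m : ℕ) (hln : l ≤ n)
    (A : Fin m → Fin n → ℚ) (b : Fin m → ℚ) (u : Fin l → ℕ) (hu : ∀ i, 0 < u i)
    (P : Set (Fin n → ℝ))
    (hP : P = {x | (∀ r, ∑ j, (A r j : ℝ) * x j ≤ (b r : ℝ)) ∧
      ∀ i : Fin l, 0 ≤ x (Fin.castLE hln i) ∧ x (Fin.castLE hln i) ≤ (u i : ℝ)})
    (hPbdd : Bornology.IsBounded P)
    (B : (i : Fin l) → Set (ℝ × (Fin (u i) → ℝ)))
    (hB : ∀ i, IsUnimodularBin (u i) (B i))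
    (q : ℕ) (hq : q = ∑ i, Nat.clog 2 (u i + 1)) :
    Prod.fst '' ((splitClosure (extSplits n l hln (fun i => u i)))^[q] (extForm hln P B)) =
      convexHull ℝ {x ∈ P | ∀ i : Fin l, ∃ w : ℤ, x (Fin.castLE hln i) = (w : ℝ)} :=
  stmt4_general n l m hln A b u P hP B hB q hq
end

section
/- Let P = {x ∈ [0,2]² : 2x₁ + x₂ ≤ 5, −2x₁ + 3x₂ ≤ 3} and let P_L = {(x,z) ∈ ℝ² × [0,1]⁴ : x ∈ P, x_i = z_{i1} + 2z_{i2} for i = 1,2} be its logarithmic binary extended formulation. Then proj_x(SC(P_L)) ⊊ SC(P), where SC(P_L) is the split closure of P_L with respect to all six variables and SC(P) is the split closure of P with respect to both x-variables. In particular, the point (5/4, 3/2) belongs to SC(P), while the inequality x₂ ≤ 7/5 is valid for SC(P_L). -/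
/-!
Every split of `ℝ²` lifts to a split of the extended space with zero `z`-coefficients, and
projection commutes with convex hulls; this gives the inclusion.

The point `x₀ = (5/4, 3/2)` survives every split `π` of `P`. Up to the symmetry
`S(π, c) = S(-π, -c-1)` we may take `π₁ ≥ 0`. If `π₁ ≥ 2` or `|π₂| ≥ 3`, an axis-parallel step
`d` with `π·d = 1` is so short that `x₀ ± d` stay in `P`, and they lie on both sides of the split.
If `π₁ = 0`, `x₀` is the midpoint of `(1, 1)` and the vertex `(3/2, 2)`, both with integral
`π`-value. The five splits with `π₁ = 1`, `|π₂| ≤ 2` are covered by explicit segments.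

In `P_L`, the split on `z₁₂` yields `3 x₂ + 2 z₁₂ ≤ 5` and the split on `x₂ - z₁₂` yields
`x₂ - z₁₂ ≤ 1`; adding twice the second to the first gives `5 x₂ ≤ 7`, which cuts off `x₀`.
-/

open Set

/-- Split functionals on `ℝ²` with integer coefficients on both variables. -/
def splitsXY : Set ((ℝ × ℝ) → ℝ) :=
  {f | ∃ π₁ π₂ : ℤ, f = fun x => (π₁ : ℝ) * x.1 + (π₂ : ℝ) * x.2}

/-- Split functionals on the extended space `ℝ² × (ℝ² × ℝ²)` with integer coefficients
on all six variables. -/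
def splitsAll : Set (((ℝ × ℝ) × ((ℝ × ℝ) × (ℝ × ℝ))) → ℝ) :=
  {f | ∃ a₁ a₂ c₁₁ c₁₂ c₂₁ c₂₂ : ℤ, f = fun p =>
    (a₁ : ℝ) * p.1.1 + (a₂ : ℝ) * p.1.2 +
    (c₁₁ : ℝ) * p.2.1.1 + (c₁₂ : ℝ) * p.2.1.2 + (c₂₁ : ℝ) * p.2.2.1 + (c₂₂ : ℝ) * p.2.2.2}

def strip {E : Type*} (f : E → ℝ) (c : ℝ) : Set E := f ⁻¹' Ioo c (c + 1)

theorem notMem_strip_iff {E : Type*} {f : E → ℝ} {c : ℝ} {y : E} :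
    y ∉ strip f c ↔ f y ≤ c ∨ c + 1 ≤ f y := by
  simp only [strip, mem_preimage, mem_Ioo, not_and_or, not_lt]

theorem intCast_notMem_Ioo (m c : ℤ) : (m : ℝ) ∉ Ioo (c : ℝ) (c + 1) := by
  rintro ⟨hlo, hhi⟩
  have : c < m := mod_cast hlo
  have : m < c + 1 := mod_cast hhi
  omega

section SplitClosure

variable {E : Type*} [AddCommGroup E] [Module ℝ E]

theorem mem_splitClosure_iff {Λ : Set (E → ℝ)} {P : Set E} {x : E} :
    x ∈ splitClosure Λ P ↔ ∀ f ∈ Λ, ∀ c : ℤ, x ∈ convexHull ℝ (P \ strip f c) := by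
  simp only [splitClosure, mem_iInter]
  rfl

variable {P : Set E} {f : E → ℝ} {x p q : E}

theorem mem_convexHull_diff_strip_of_mem_segment {c : ℝ} (hp : p ∈ P) (hq : q ∈ P)
    (hx : x ∈ segment ℝ p q) (hfp : f p ∉ Ioo c (c + 1)) (hfq : f q ∉ Ioo c (c + 1)) :
    x ∈ convexHull ℝ (P \ strip f c) :=
  segment_subset_convexHull (s := P \ strip f c) ⟨hp, hfp⟩ ⟨hq, hfq⟩ hx

theorem mem_convexHull_diff_strip_of_intCast (hp : p ∈ P) (hq : q ∈ P)
    (hx : x ∈ segment ℝ p q) {m n : ℤ} (hm : f p = m) (hn : f q = n) (c : ℤ) :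
    x ∈ convexHull ℝ (P \ strip f c) :=
  mem_convexHull_diff_strip_of_mem_segment hp hq hx
    (hm ▸ intCast_notMem_Ioo m c) (hn ▸ intCast_notMem_Ioo n c)

theorem mem_convexHull_diff_strip_of_le (hx : x ∈ P) (hp : p ∈ P) (hq : q ∈ P)
    (hxpq : x ∈ segment ℝ p q) (hfp : f p ≤ f x - 1) (hfq : f x + 1 ≤ f q) (c : ℝ) :
    x ∈ convexHull ℝ (P \ strip f c) := by
  by_cases hxc : x ∈ strip f c
  · exact mem_convexHull_diff_strip_of_mem_segment hp hq hxpq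
      (fun h => by linarith [h.1, hxc.2]) (fun h => by linarith [h.2, hxc.1])
  · exact subset_convexHull ℝ _ ⟨hx, hxc⟩

theorem le_of_mem_splitClosure {Λ : Set (E → ℝ)} {g : E → ℝ} (hg : IsLinearMap ℝ g) {b : ℝ}
    (hf : f ∈ Λ) (c : ℤ) (hcut : ∀ y ∈ P, y ∉ strip f c → g y ≤ b)
    (hx : x ∈ splitClosure Λ P) : g x ≤ b :=
  convexHull_min (fun y hy => hcut y hy.1 hy.2) (convex_halfSpace_le hg b)
    (mem_splitClosure_iff.mp hx f hf c)

theorem image_splitClosure_subset {F : Type*} [AddCommGroup F] [Module ℝ F] (L : E →ₗ[ℝ] F)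
    {Λ : Set (E → ℝ)} {Λ' : Set (F → ℝ)} {Q : Set F} (hPQ : MapsTo L P Q)
    (hΛ : ∀ f ∈ Λ', f ∘ L ∈ Λ) : L '' splitClosure Λ P ⊆ splitClosure Λ' Q := by
  rintro _ ⟨x, hx, rfl⟩
  rw [mem_splitClosure_iff] at hx ⊢
  intro f hf c
  have hLx := mem_image_of_mem L (hx _ (hΛ f hf) c)
  rw [L.image_convexHull] at hLx
  refine convexHull_mono ?_ hLx
  rintro _ ⟨y, ⟨hyP, hyS⟩, rfl⟩
  exact ⟨hPQ hyP, hyS⟩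

end SplitClosure

def P₀ : Set (ℝ × ℝ) :=
  {x | 0 ≤ x.1 ∧ x.1 ≤ 2 ∧ 0 ≤ x.2 ∧ x.2 ≤ 2 ∧ 2 * x.1 + x.2 ≤ 5 ∧ -2 * x.1 + 3 * x.2 ≤ 3}

def intForm (π₁ π₂ : ℤ) (x : ℝ × ℝ) : ℝ := π₁ * x.1 + π₂ * x.2

theorem mem_splitClosure_splitsXY_iff {P : Set (ℝ × ℝ)} {x : ℝ × ℝ} :
    x ∈ splitClosure splitsXY P ↔
      ∀ π₁ π₂ c : ℤ, x ∈ convexHull ℝ (P \ strip (intForm π₁ π₂) c) := by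
  rw [mem_splitClosure_iff]
  constructor
  · exact fun h π₁ π₂ => h _ ⟨π₁, π₂, rfl⟩
  · rintro h _ ⟨π₁, π₂, rfl⟩
    exact h π₁ π₂

theorem strip_intForm_neg (π₁ π₂ c : ℤ) :
    strip (intForm (-π₁) (-π₂)) ((-c - 1 : ℤ) : ℝ) = strip (intForm π₁ π₂) c := by
  ext x
  simp only [strip, intForm, mem_preimage, mem_Ioo]
  push_cast
  constructor <;> rintro ⟨h₁, h₂⟩ <;> constructor <;> linarith

local notation "x₀" => ((5 / 4 : ℝ), (3 / 2 : ℝ))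

theorem add_mem_P₀ {d : ℝ × ℝ} (hd : 2 * |d.1| + 3 * |d.2| ≤ 1) : x₀ + d ∈ P₀ := by
  have := le_abs_self d.1
  have := neg_abs_le d.1
  have := le_abs_self d.2
  have := neg_abs_le d.2
  simp only [P₀, mem_ofPred_eq, Prod.fst_add, Prod.snd_add]
  refine ⟨?_, ?_, ?_, ?_, ?_, ?_⟩ <;> linarith

theorem mem_convexHull_P₀_of_intForm_eq_one {π₁ π₂ : ℤ} {d : ℝ × ℝ}
    (hd : 2 * |d.1| + 3 * |d.2| ≤ 1) (hfd : intForm π₁ π₂ d = 1) (c : ℝ) :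
    x₀ ∈ convexHull ℝ (P₀ \ strip (intForm π₁ π₂) c) := by
  have hlin : ∀ t : ℝ, intForm π₁ π₂ (x₀ + t • d) = intForm π₁ π₂ x₀ + t := by
    intro t
    simp only [intForm, Prod.fst_add, Prod.snd_add, Prod.smul_fst, Prod.smul_snd,
      smul_eq_mul] at hfd ⊢
    linear_combination t * hfd
  refine mem_convexHull_diff_strip_of_le (p := x₀ + (-1 : ℝ) • d) (q := x₀ + (1 : ℝ) • d)
    (by norm_num [P₀])
    (add_mem_P₀ (by simpa using hd)) (add_mem_P₀ (by simpa using hd)) ?_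
    (by linarith [hlin (-1)]) (by linarith [hlin 1]) c
  simpa [sub_eq_add_neg] using mem_segment_sub_add (𝕜 := ℝ) x₀ d

theorem mem_convexHull_P₀_of_two_le_abs_fst {π₁ : ℤ} (hπ₁ : 2 ≤ |π₁|) (π₂ : ℤ) (c : ℝ) :
    x₀ ∈ convexHull ℝ (P₀ \ strip (intForm π₁ π₂) c) := by
  have hπ₁ : (2 : ℝ) ≤ |(π₁ : ℝ)| := mod_cast hπ₁
  refine mem_convexHull_P₀_of_intForm_eq_one (d := ((π₁ : ℝ)⁻¹, 0)) ?_ ?_ c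
  · have := inv_anti₀ (by norm_num) hπ₁
    simp only [abs_inv, abs_zero]
    linarith
  · have : (π₁ : ℝ) ≠ 0 := abs_pos.mp (by linarith)
    simp [intForm, this]

theorem mem_convexHull_P₀_of_three_le_abs_snd (π₁ : ℤ) {π₂ : ℤ} (hπ₂ : 3 ≤ |π₂|) (c : ℝ) :
    x₀ ∈ convexHull ℝ (P₀ \ strip (intForm π₁ π₂) c) := by
  have hπ₂ : (3 : ℝ) ≤ |(π₂ : ℝ)| := mod_cast hπ₂
  refine mem_convexHull_P₀_of_intForm_eq_one (d := (0, (π₂ : ℝ)⁻¹)) ?_ ?_ c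
  · have := inv_anti₀ (by norm_num) hπ₂
    simp only [abs_inv, abs_zero]
    linarith
  · have : (π₂ : ℝ) ≠ 0 := abs_pos.mp (by linarith)
    simp [intForm, this]

theorem mem_convexHull_P₀_of_fst_eq_zero (π₂ c : ℤ) :
    x₀ ∈ convexHull ℝ (P₀ \ strip (intForm 0 π₂) c) :=
  mem_convexHull_diff_strip_of_intCast (p := (1, 1)) (q := (3 / 2, 2)) (m := π₂) (n := 2 * π₂)
    (by norm_num [P₀]) (by norm_num [P₀])
    ⟨1 / 2, 1 / 2, by norm_num, by norm_num, by norm_num, by norm_num [Prod.ext_iff]⟩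
    (by simp [intForm]) (by simp [intForm]; ring) c

theorem mem_convexHull_P₀_of_fst_eq_one {π₂ : ℤ} (hπ₂ : |π₂| ≤ 2) (c : ℤ) :
    x₀ ∈ convexHull ℝ (P₀ \ strip (intForm 1 π₂) c) := by
  have key (p q : ℝ × ℝ) (a : ℝ) (m n : ℤ) (h : p ∈ P₀ ∧ q ∈ P₀ ∧ 0 ≤ a ∧ a ≤ 1 ∧
      (1 - a) • p + a • q = x₀ ∧ intForm 1 π₂ p = m ∧ intForm 1 π₂ q = n) :
      x₀ ∈ convexHull ℝ (P₀ \ strip (intForm 1 π₂) c) :=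
    let ⟨hp, hq, ha₀, ha₁, hx, hm, hn⟩ := h
    mem_convexHull_diff_strip_of_intCast hp hq ⟨1 - a, a, by linarith, ha₀, by ring, hx⟩ hm hn c
  obtain ⟨hlo, hhi⟩ := abs_le.mp hπ₂
  interval_cases π₂
  · exact key (8 / 5, 9 / 5) (1 / 5, 3 / 5) (1 / 4) (-2) (-1) 
      (by norm_num [P₀, intForm, Prod.ext_iff])
  · exact key (0, 1) (5 / 3, 5 / 3) (3 / 4) (-1) 0 
      (by norm_num [P₀, intForm, Prod.ext_iff])
  · exact key (1, 5 / 3) (2, 1) (1 / 4) 1 2 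
      (by norm_num [P₀, intForm, Prod.ext_iff])
  · exact key (1, 1) (4 / 3, 5 / 3) (3 / 4) 2 3 
      (by norm_num [P₀, intForm, Prod.ext_iff])
  · exact key (7 / 6, 17 / 12) (3 / 2, 7 / 4) (1 / 4) 4 5 
      (by norm_num [P₀, intForm, Prod.ext_iff])

theorem mem_splitClosure_P₀ : x₀ ∈ splitClosure splitsXY P₀ := by
  rw [mem_splitClosure_splitsXY_iff]
  intro π₁ π₂ c
  wlog hπ₁ : 0 ≤ π₁ generalizing π₁ π₂ c
  · rw [← strip_intForm_neg]
    exact this (-π₁) (-π₂) (-c - 1) (by omega)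
  obtain rfl | rfl | h₂ : π₁ = 0 ∨ π₁ = 1 ∨ 2 ≤ π₁ := by omega
  · exact mem_convexHull_P₀_of_fst_eq_zero π₂ c
  · by_cases h₃ : 3 ≤ |π₂|
    · exact mem_convexHull_P₀_of_three_le_abs_snd 1 h₃ c
    · exact mem_convexHull_P₀_of_fst_eq_one (by omega) c
  · exact mem_convexHull_P₀_of_two_le_abs_fst (by rwa [abs_of_nonneg hπ₁]) π₂ c

def PL₀ : Set ((ℝ × ℝ) × ((ℝ × ℝ) × (ℝ × ℝ))) :=
  {p | p.1 ∈ P₀ ∧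
    (0 ≤ p.2.1.1 ∧ p.2.1.1 ≤ 1) ∧ (0 ≤ p.2.1.2 ∧ p.2.1.2 ≤ 1) ∧
    (0 ≤ p.2.2.1 ∧ p.2.2.1 ≤ 1) ∧ (0 ≤ p.2.2.2 ∧ p.2.2.2 ≤ 1) ∧
    p.1.1 = p.2.1.1 + 2 * p.2.1.2 ∧ p.1.2 = p.2.2.1 + 2 * p.2.2.2}

theorem image_fst_splitClosure_PL₀_subset :
    Prod.fst '' splitClosure splitsAll PL₀ ⊆ splitClosure splitsXY P₀ := by
  refine image_splitClosure_subset (LinearMap.fst ℝ (ℝ × ℝ) ((ℝ × ℝ) × (ℝ × ℝ)))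
    (fun _ hp => hp.1) ?_
  rintro _ ⟨π₁, π₂, rfl⟩
  exact ⟨π₁, π₂, 0, 0, 0, 0, by funext; simp⟩

theorem snd_le_of_mem_splitClosure_PL₀ {p : (ℝ × ℝ) × ((ℝ × ℝ) × (ℝ × ℝ))}
    (hp : p ∈ splitClosure splitsAll PL₀) : p.1.2 ≤ 7 / 5 := by
  have cutA : 3 * p.1.2 + 2 * p.2.1.2 ≤ 5 := by
    refine le_of_mem_splitClosure (g := fun q => 3 * q.1.2 + 2 * q.2.1.2) ?_
      (f := fun q => q.2.1.2) ?_ 0 ?_ hp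
    · exact ⟨fun _ _ => by simp only [Prod.fst_add, Prod.snd_add]; ring,
        fun _ _ => by simp only [Prod.smul_fst, Prod.smul_snd, smul_eq_mul]; ring⟩
    · exact ⟨0, 0, 0, 1, 0, 0, by funext; simp⟩
    rintro q ⟨⟨-, hx₁, -, -, hx₅, hx₆⟩, ⟨hz₁₁_nonneg, hz₁₁_le⟩, ⟨hz₁₂_nonneg, -⟩, -, -, hx₁z, -⟩ hq
    push_cast at hq
    rcases notMem_strip_iff.mp hq with hq | hq <;> linarith
  have cutB : p.1.2 - p.2.1.2 ≤ 1 := by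
    refine le_of_mem_splitClosure (g := fun q => q.1.2 - q.2.1.2) ?_
      (f := fun q => q.1.2 - q.2.1.2) ?_ 1 ?_ hp
    · exact ⟨fun _ _ => by simp only [Prod.fst_add, Prod.snd_add]; ring,
        fun _ _ => by simp only [Prod.smul_fst, Prod.smul_snd, smul_eq_mul]; ring⟩
    · exact ⟨0, 1, 0, -1, 0, 0, by funext; push_cast; ring⟩
    rintro q ⟨⟨-, hx₁, -, hx₂, -, hx₆⟩, ⟨-, hz₁₁_le⟩, ⟨hz₁₂_nonneg, -⟩, -, -, hx₁z, -⟩ hq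
    push_cast at hq
    rcases notMem_strip_iff.mp hq with hq | hq <;> linarith
  linarith

/-- Let `P = {x ∈ [0,2]² : 2x₁ + x₂ ≤ 5, -2x₁ + 3x₂ ≤ 3}` and let
`P_L` be its logarithmic binary extended formulation (`x_i = z_{i1} + 2z_{i2}`,
`z ∈ [0,1]⁴`).  Then `proj_x(SC(P_L)) ⊊ SC(P)`; in particular `(5/4, 3/2) ∈ SC(P)`
while `x₂ ≤ 7/5` is valid for `SC(P_L)`. -/
theorem stmt10 (P : Set (ℝ × ℝ))
    (hP : P = {x | 0 ≤ x.1 ∧ x.1 ≤ 2 ∧ 0 ≤ x.2 ∧ x.2 ≤ 2 ∧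
      2 * x.1 + x.2 ≤ 5 ∧ -2 * x.1 + 3 * x.2 ≤ 3})
    (PL : Set ((ℝ × ℝ) × ((ℝ × ℝ) × (ℝ × ℝ))))
    (hPL : PL = {p | p.1 ∈ P ∧
      (0 ≤ p.2.1.1 ∧ p.2.1.1 ≤ 1) ∧ (0 ≤ p.2.1.2 ∧ p.2.1.2 ≤ 1) ∧
      (0 ≤ p.2.2.1 ∧ p.2.2.1 ≤ 1) ∧ (0 ≤ p.2.2.2 ∧ p.2.2.2 ≤ 1) ∧
      p.1.1 = p.2.1.1 + 2 * p.2.1.2 ∧ p.1.2 = p.2.2.1 + 2 * p.2.2.2}) :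
    Prod.fst '' splitClosure splitsAll PL ⊂ splitClosure splitsXY P ∧
    ((5 / 4 : ℝ), (3 / 2 : ℝ)) ∈ splitClosure splitsXY P ∧
    (∀ p ∈ splitClosure splitsAll PL, p.1.2 ≤ 7 / 5) := by
  obtain rfl : P = P₀ := hP
  obtain rfl : PL = PL₀ := hPL
  refine ⟨ssubset_iff_exists.mpr ⟨image_fst_splitClosure_PL₀_subset, x₀, mem_splitClosure_P₀, ?_⟩,
    mem_splitClosure_P₀, fun p hp => snd_le_of_mem_splitClosure_PL₀ hp⟩
  rintro ⟨p, hp, hpx₀⟩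
  have := snd_le_of_mem_splitClosure_PL₀ hp
  rw [hpx₀] at this
  norm_num at this
end
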